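/- arXiv:2409.10152 — 2 statements merged into one kernel-verified Lean document; each statement's English description precedes it below -/
import Mathlib

section
/- The only Lucas number expressible as 3 times a perfect square is L_2 = 3; that is, if L_n = 3x^2 for natural numbers n and x with x ≥ 1, then n = 2 and x = 1. -/
def lucas : ℕ → ℕ
  | 0 => 2
  | 1 => 1
  | n + 2 => lucas (n + 1) + lucas n

lemma lucas_zero : lucas 0 = 2 := rfl
lemma lucas_one : lucas 1 = 1 := rfl
lemma lucas_rec : ∀ n, lucas (n+2) = lucas (n+1) + lucas n := fun _ => rfl

open Nat in
lemma lucas_int : ∀ n : ℕ, (lucas n : ℤ) = 2 * fib (n+1) - fib n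
  | 0 => by simp [lucas]
  | 1 => by simp [lucas, fib_one, fib_two]
  | n + 2 => by
    have h1 := lucas_int (n+1)
    have h2 := lucas_int n
    simp only [lucas]
    push_cast
    rw [h1, h2, show n+2+1 = (n+1)+2 from rfl, fib_add_two (n := n+1),
      show n+2 = n+1+1 from rfl, fib_add_two (n := n)]
    push_cast
    ring

open Nat in
lemma fib_I : ∀ m : ℕ, (fib (m+1) : ℤ)^2 - fib (m+1) * fib m - (fib m)^2 = (-1)^m
  | 0 => by simp
  | m + 1 => by
    have h := fib_I m
    rw [show m+1+1 = m+2 from rfl, fib_add_two]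
    push_cast
    linear_combination -h

open Nat in
lemma lucas_add : ∀ s m : ℕ, (lucas (m + s + 1) : ℤ) = lucas (m+1) * fib (s+1) + lucas m * fib s
  | 0, m => by simp
  | 1, m => by
    simp [show m + 1 + 1 = m + 2 from rfl, lucas, fib_one, fib_two]
  | s + 2, m => by
    have h1 := lucas_add (s+1) m
    have h2 := lucas_add s m
    rw [show m + (s+2) + 1 = (m + s + 1) + 2 from by ring, show (lucas ((m+s+1)+2) : ℤ) = lucas ((m+s+1)+1) + lucas (m+s+1) from by simp [lucas],
      show (m+s+1)+1 = m + (s+1) + 1 from by ring, h1, h2,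
      show s+2+1 = (s+1)+2 from rfl, fib_add_two (n := s+1), show s+2 = s+1+1 from rfl,
      fib_add_two (n := s)]
    push_cast
    ring

open Nat in
lemma fib_two_mul_int (k : ℕ) : (fib (2*k) : ℤ) = fib k * lucas k := by
  have h := Nat.fib_two_mul k
  have hle : fib k ≤ 2 * fib (k+1) := le_trans (fib_le_fib_succ) (by omega)
  have : (fib (2*k) : ℤ) = fib k * (2 * fib (k+1) - fib k) := by
    rw [h]; push_cast [hle]; ring
  rw [this, lucas_int]

open Nat in
lemma fib_two_mul_add_one_int (k : ℕ) : (fib (2*k+1) : ℤ) = lucas (k+1) * fib k + (-1)^k := by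
  have h := Nat.fib_two_mul_add_one k
  have hI := fib_I k
  have : (fib (2*k+1) : ℤ) = (fib (k+1))^2 + (fib k)^2 := by rw [h]; push_cast; ring
  rw [this, lucas_int, show k+1+1 = k+2 from rfl, fib_add_two]
  push_cast
  linear_combination hI

open Nat in
lemma C1 (m k : ℕ) :
    (lucas (k+1) : ℤ) ∣ (lucas (m + 2*(k+1)) + (-1)^(k+1) * lucas m) := by
  have h := lucas_add (2*k+1) m
  rw [show m + (2*k+1) + 1 = m + 2*(k+1) from by ring] at h
  rw [show 2*k+1+1 = 2*(k+1) from by ring] at h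
  rw [h, fib_two_mul_int (k+1), fib_two_mul_add_one_int k]
  refine ⟨lucas (m+1) * fib (k+1) + lucas m * fib k, ?_⟩
  ring

open Nat in
lemma C2 (K : ℕ) (hK : Even K) (hK1 : 1 ≤ K) : ∀ j m : ℕ,
    (lucas K : ℤ) ∣ (lucas (m + 2*K*j) - (-1)^j * lucas m) := by
  obtain ⟨k, rfl⟩ : ∃ k, K = k + 1 := ⟨K - 1, by omega⟩
  intro j
  induction j with
  | zero => intro m; simp
  | succ j ih =>
    intro m
    have h1 := ih (m + 2*(k+1))
    have h2 := C1 m k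
    have hsgn : ((-1:ℤ))^(k+1) = 1 := by
      rcases hK with ⟨r, hr⟩
      have : k + 1 = 2 * r := by omega
      rw [this]; simp [pow_mul]
    rw [hsgn, one_mul] at h2
    have : (lucas (m + 2*(k+1)*(j+1)) : ℤ) - (-1)^(j+1) * lucas m =
        ((lucas ((m + 2*(k+1)) + 2*(k+1)*j) : ℤ) - (-1)^j * lucas (m + 2*(k+1)))
        + (-1)^j * ((lucas (m + 2*(k+1)) : ℤ) + lucas m) := by
      rw [show m + 2*(k+1)*(j+1) = (m + 2*(k+1)) + 2*(k+1)*j from by ring]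
      ring
    rw [this]
    exact dvd_add h1 (Dvd.dvd.mul_left h2 _)

open Nat in
lemma lucas_two_mul (m : ℕ) : (lucas (2*m) : ℤ) = (lucas m)^2 - 2*(-1)^m := by
  rw [lucas_int, lucas_int, show 2*m+1 = 2*m+1 from rfl, fib_two_mul_add_one_int m,
    fib_two_mul_int m, lucas_int (m+1), lucas_int m, show m+1+1 = m+2 from rfl, fib_add_two]
  push_cast
  linear_combination -4 * fib_I m

open Nat in
lemma lucas_vals' : lucas 2 = 3 ∧ lucas 3 = 4 ∧ lucas 4 = 7 ∧ lucas 5 = 11 ∧ lucas 6 = 18 ∧ lucas 7 = 29 ∧ lucas 8 = 47 ∧ lucas 9 = 76 := by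
  have h2 : lucas 2 = 3 := by rw [show (2:ℕ) = 0+2 from rfl, lucas_rec, lucas_one, lucas_zero]
  have h3 : lucas 3 = 4 := by rw [show (3:ℕ) = 1+2 from rfl, lucas_rec, h2, lucas_one]
  have h4 : lucas 4 = 7 := by rw [show (4:ℕ) = 2+2 from rfl, lucas_rec, h3, h2]
  have h5 : lucas 5 = 11 := by rw [show (5:ℕ) = 3+2 from rfl, lucas_rec, h4, h3]
  have h6 : lucas 6 = 18 := by rw [show (6:ℕ) = 4+2 from rfl, lucas_rec, h5, h4]
  have h7 : lucas 7 = 29 := by rw [show (7:ℕ) = 5+2 from rfl, lucas_rec, h6, h5]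
  have h8 : lucas 8 = 47 := by rw [show (8:ℕ) = 6+2 from rfl, lucas_rec, h7, h6]
  have h9 : lucas 9 = 76 := by rw [show (9:ℕ) = 7+2 from rfl, lucas_rec, h8, h7]
  exact ⟨h2, h3, h4, h5, h6, h7, h8, h9⟩

open Nat in
lemma lucas_eight : lucas 8 = 47 := lucas_vals'.2.2.2.2.2.2.1
open Nat in
lemma lucas_nine : lucas 9 = 76 := lucas_vals'.2.2.2.2.2.2.2

-- periodicity mod 3 with period 8
open Nat in
lemma lucas_mod3_period : ∀ n : ℕ, (lucas (n+8) : ZMod 3) = (lucas n : ZMod 3)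
  | 0 => by rw [show (0:ℕ)+8 = 8 from rfl, lucas_eight, lucas_zero]; decide
  | 1 => by rw [show (1:ℕ)+8 = 9 from rfl, lucas_nine, lucas_one]; decide
  | n + 2 => by
    have h1 := lucas_mod3_period (n+1)
    have h2 := lucas_mod3_period n
    rw [show n+2+8 = (n+8)+2 from by ring, lucas_rec, lucas_rec n,
      show n+8+1 = (n+1)+8 from by ring]
    push_cast
    rw [h1, h2]

open Nat in
lemma lucas_mod3 (n : ℕ) : (lucas n : ZMod 3) = (lucas (n % 8) : ZMod 3) := by
  conv_lhs => rw [show n = 8 * (n / 8) + n % 8 from by omega]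
  generalize n % 8 = r
  induction n / 8 with
  | zero => simp
  | succ q ih =>
    rw [show 8*(q+1)+r = (8*q+r)+8 from by ring, lucas_mod3_period, ih]

open Nat in
lemma three_dvd_lucas (n : ℕ) (h : 3 ∣ lucas n) : n % 8 = 2 ∨ n % 8 = 6 := by
  have hz : (lucas n : ZMod 3) = 0 := by
    exact_mod_cast (ZMod.natCast_eq_zero_iff _ _).2 h
  rw [lucas_mod3] at hz
  obtain ⟨h2, h3, h4, h5, h6, h7, h8, h9⟩ := lucas_vals'
  have hr : n % 8 < 8 := Nat.mod_lt _ (by norm_num)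
  interval_cases hn : n % 8 <;> simp_all [lucas_zero, lucas_one] <;> revert hz <;> decide

open Nat in
lemma lucas_pow2_mod4 : ∀ a : ℕ, lucas (2^(a+2)) % 4 = 3 := by
  intro a
  induction a with
  | zero => rw [show (2:ℕ)^2 = 4 from rfl, lucas_vals'.2.2.1]
  | succ a ih =>
    have hm : Even (2^(a+2)) := by
      exact (Nat.even_pow).2 ⟨even_two, by omega⟩
    have h := lucas_two_mul (2^(a+2))
    rw [Even.neg_one_pow hm] at h
    obtain ⟨q, hq⟩ : ∃ q, lucas (2^(a+2)) = 4*q + 3 := ⟨lucas (2^(a+2)) / 4, by omega⟩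
    have h2 : (lucas (2*2^(a+2)) : ℤ) = 16*q^2 + 24*q + 7 := by rw [h, hq]; push_cast; ring
    have h3 : lucas (2*2^(a+2)) = 16*q^2 + 24*q + 7 := by exact_mod_cast h2
    rw [show a+1+2 = a+2+1 from rfl, pow_succ, mul_comm, h3]
    omega

open Nat in
lemma three_not_dvd_lucas_pow2 (a : ℕ) : ¬ (3 ∣ lucas (2^(a+2))) := by
  intro hdvd
  have hz : (lucas (2^(a+2)) : ZMod 3) = 0 := by
    exact_mod_cast (ZMod.natCast_eq_zero_iff _ _).2 hdvd
  rw [lucas_mod3] at hz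
  rcases Nat.eq_zero_or_pos a with rfl | ha
  · rw [show 2^(0+2) % 8 = 4 from rfl, lucas_vals'.2.2.1] at hz
    exact absurd hz (by decide)
  · have : 2^(a+2) % 8 = 0 := by
      have : (8:ℕ) ∣ 2^(a+2) := by
        have : (2:ℕ)^3 ∣ 2^(a+2) := pow_dvd_pow 2 (by omega)
        simpa using this
      omega
    rw [this, lucas_zero] at hz
    exact absurd hz (by decide)

open Nat in
lemma exists_prime_three_mod_four : ∀ N : ℕ, N % 4 = 3 → ∃ p, p.Prime ∧ p ∣ N ∧ p % 4 = 3 := by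
  intro N
  induction N using Nat.strong_induction_on with
  | _ N ih =>
    intro hN
    have hN1 : N ≠ 1 := by omega
    obtain ⟨p, hp, hpd⟩ := Nat.exists_prime_and_dvd hN1
    have hp2 : p ≠ 2 := by
      rintro rfl
      obtain ⟨c, rfl⟩ := hpd
      omega
    have hpodd : p % 4 = 1 ∨ p % 4 = 3 := by
      have := hp.two_le
      have : p % 2 = 1 := Nat.odd_iff.1 (hp.odd_of_ne_two hp2)
      omega
    rcases hpodd with h1 | h3
    · obtain ⟨c, rfl⟩ := hpd
      have hc : c % 4 = 3 := by
        have h4 := Nat.mul_mod p c 4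
        rw [h1, hN] at h4
        omega
      have hclt : c < p * c := by
        have hp2le := hp.two_le
        have hc0 : 0 < c := by rcases Nat.eq_zero_or_pos c with rfl | h; · omega
                               · exact h
        calc c = 1 * c := (one_mul c).symm
        _ < p * c := Nat.mul_lt_mul_of_lt_of_le (by omega) (le_refl c) hc0
      obtain ⟨r, hr, hrd, hr4⟩ := ih c hclt hc
      exact ⟨r, hr, hrd.mul_left p, hr4⟩
    · exact ⟨p, hp, hpd, h3⟩

open Nat in
lemma lucas_back (K : ℕ) (hK : Even K) (hK4 : 4 ≤ K) :
    (lucas K : ℤ) ∣ (lucas (2*K - 2) : ℤ) + 3 := by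
  obtain ⟨c, hc⟩ : ∃ c, 2*K = c + 2 := ⟨2*K - 2, by omega⟩
  have h0 := C2 K hK (by omega) 1 0
  have h1 := C2 K hK (by omega) 1 1
  rw [show (0 + 2*K*1) = c + 2 from by omega] at h0
  rw [show (1 + 2*K*1) = c + 3 from by omega] at h1
  have e2 : lucas (c+2) = lucas (c+1) + lucas c := lucas_rec c
  have e3 : lucas (c+3) = lucas (c+2) + lucas (c+1) := lucas_rec (c+1)
  rw [lucas_zero] at h0; rw [lucas_one] at h1
  have key : (lucas (2*K-2) : ℤ) + 3 =
      2 * ((lucas (c+2) : ℤ) - (-1)^1 * 2) - ((lucas (c+3) : ℤ) - (-1)^1 * 1) := by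
    rw [show 2*K - 2 = c from by omega, e3, e2]
    push_cast
    ring
  rw [key]
  exact dvd_sub (Dvd.dvd.mul_left h0 2) h1

open Nat in
lemma no_sol (n x a : ℕ) (h : lucas n = 3 * x ^ 2)
    (hdvd : (lucas (2^(a+2)) : ℤ) ∣ (lucas n : ℤ) + 3) : False := by
  obtain ⟨p, hp, hpd, hp4⟩ := exists_prime_three_mod_four (lucas (2^(a+2))) (lucas_pow2_mod4 a)
  haveI : Fact p.Prime := ⟨hp⟩
  have hp3 : p ≠ 3 := by
    rintro rfl
    exact three_not_dvd_lucas_pow2 a hpd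
  have hpn : (p : ℤ) ∣ (lucas n : ℤ) + 3 := dvd_trans (Int.natCast_dvd_natCast.2 hpd) hdvd
  have hpn' : p ∣ 3 * (x^2 + 1) := by
    have : ((3 * (x^2+1) : ℕ) : ℤ) = (lucas n : ℤ) + 3 := by rw [h]; push_cast; ring
    exact_mod_cast this ▸ hpn
  have hpx : p ∣ x^2 + 1 := by
    rcases (hp.dvd_mul.1 hpn') with h3 | hx
    · exact absurd ((Nat.prime_dvd_prime_iff_eq hp Nat.prime_three).1 h3) hp3
    · exact hx
  have hsq : IsSquare (-1 : ZMod p) := by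
    have : ((x:ZMod p)^2 + 1) = 0 := by
      have := (ZMod.natCast_eq_zero_iff _ p).2 hpx
      push_cast at this
      exact_mod_cast this
    exact ⟨x, by rw [← sq]; linear_combination -this⟩
  exact (ZMod.exists_sq_eq_neg_one_iff.1 hsq) hp4

theorem stmt6 (n x : ℕ) (hx : 1 ≤ x) (h : lucas n = 3 * x ^ 2) : n = 2 ∧ x = 1 := by
  have h3 : 3 ∣ lucas n := ⟨x^2, h⟩
  have hn8 := three_dvd_lucas n h3
  have hn2 : n = 2 := by
    by_contra hne
    rcases hn8 with h2 | h6
    · -- n ≡ 2 mod 8, n ≠ 2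
      obtain ⟨s, hs⟩ : ∃ s, n = 2 + 8*s := ⟨n/8, by omega⟩
      have hs0 : s ≠ 0 := by rintro rfl; omega
      obtain ⟨a, v, hvodd, hv⟩ := Nat.exists_eq_two_pow_mul_odd hs0
      have hKe : Even (2^(a+2)) := (Nat.even_pow).2 ⟨even_two, by omega⟩
      have hd := C2 (2^(a+2)) hKe (Nat.one_le_two_pow) v 2
      rw [show 2 + 2*2^(a+2)*v = 2 + 8*s from by rw [hv]; ring, ← hs,
        Odd.neg_one_pow hvodd, lucas_vals'.1] at hd
      refine no_sol n x a h ?_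
      have : (lucas n : ℤ) + 3 = (lucas n : ℤ) - (-1) * 3 := by ring
      rw [this]; exact_mod_cast hd
    · -- n ≡ 6 mod 8
      obtain ⟨t, ht⟩ : ∃ t, n + 2 = 8*t := ⟨(n+2)/8, by omega⟩
      have ht0 : t ≠ 0 := by rintro rfl; omega
      obtain ⟨a, v, hvodd, hv⟩ := Nat.exists_eq_two_pow_mul_odd ht0
      set K := 2^(a+2) with hKdef
      have hKe : Even K := (Nat.even_pow).2 ⟨even_two, by omega⟩
      have hK4 : 4 ≤ K := by
        have : (2:ℕ)^2 ≤ 2^(a+2) := Nat.pow_le_pow_right (by norm_num) (by omega)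
        simpa using this
      obtain ⟨w, rfl⟩ : ∃ w, v = w + 1 := ⟨v-1, by have := hvodd.pos; omega⟩
      have hsum : n + 2 = 2*K*(w+1) := by rw [ht, hv, hKdef]; ring
      have hexp : 2*K*(w+1) = 2*K*w + 2*K := by ring
      have hn : n = (2*K - 2) + 2*K*w := by omega
      have hweven : Even w := by
        rcases hvodd with ⟨c, hc⟩
        exact ⟨c, by omega⟩
      have hd := C2 K hKe (by omega) w (2*K - 2)
      rw [← hn, Even.neg_one_pow hweven, one_mul] at hd
      have hb := lucas_back K hKe hK4
      refine no_sol n x a h ?_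
      have : (lucas n : ℤ) + 3 = ((lucas n : ℤ) - lucas (2*K-2)) + ((lucas (2*K-2) : ℤ) + 3) := by
        ring
      rw [this]
      exact dvd_add hd hb
  refine ⟨hn2, ?_⟩
  rw [hn2, lucas_vals'.1] at h
  nlinarith
end

section
/- The Diophantine equation L_n^2 + L_{n+1}^2 = x^2 in positive integers n, x has the unique solution (n, x) = (2, 5). -/
open Nat

lemma lucas_add_two (n : ℕ) : lucas (n+2) = lucas (n+1) + lucas n := rfl

lemma lucas_succ_eq : ∀ n, lucas (n+1) = fib n + fib (n+2) := by
  intro n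
  induction n using Nat.strong_induction_on with
  | _ n ih =>
    match n with
    | 0 => rfl
    | 1 => rfl
    | (m+2) =>
      rw [lucas_add_two, ih (m+1) (by omega), ih m (by omega)]
      rw [fib_add_two (n := m+2), fib_add_two (n := m+1), fib_add_two (n := m)]
      ring

lemma lucasZ (k : ℕ) : (lucas k : ℤ) = 2 * (fib (k+1) : ℤ) - fib k := by
  cases k with
  | zero => norm_num [lucas]
  | succ s =>
    rw [lucas_succ_eq]
    have h : fib (s+2) = fib s + fib (s+1) := fib_add_two
    push_cast [h]
    ring

lemma key_identity (n : ℕ) : lucas n ^ 2 + lucas (n+1) ^ 2 = 5 * fib (2*n+1) := by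
  cases n with
  | zero => rfl
  | succ m =>
    rw [lucas_succ_eq, lucas_succ_eq]
    have h1 : fib (2*(m+1)+1) = fib (m+2)^2 + fib (m+1)^2 := fib_two_mul_add_one (m+1)
    have h2 : fib (m+3) = fib (m+1) + fib (m+2) := fib_add_two
    have h3 : fib (m+2) = fib m + fib (m+1) := fib_add_two
    rw [h1, h2, h3]
    ring

lemma cassini (t : ℕ) : ((fib (t+1) : ℤ))^2 - fib (t+1) * fib t - (fib t)^2 = (-1)^t := by
  induction t with
  | zero => norm_num
  | succ s ih =>
    have h : fib (s+2) = fib s + fib (s+1) := fib_add_two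
    push_cast [h]
    push_cast at ih
    rw [pow_succ]
    linear_combination -ih

lemma fibZ_shift (m t : ℕ) :
    (fib (m+t) : ℤ) = ((fib (t+1) : ℤ) - fib t) * fib m + fib t * fib (m+1) := by
  cases t with
  | zero => simp
  | succ s =>
    have h := Nat.fib_add m s
    have h2 : fib (s+2) = fib s + fib (s+1) := fib_add_two
    have : m + (s+1) = m + s + 1 := rfl
    rw [this, h]
    push_cast [h2]
    ring

lemma step7 (m k : ℕ) :
    (fib (m + 2*k) : ℤ) + (-1)^k * fib m = (fib (m+k) : ℤ) * lucas k := by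
  have h3 : (fib (m + 2*k) : ℤ)
      = ((fib (k+1) : ℤ) - fib k) * fib (m+k) + fib k * fib (m+k+1) := by
    have e : m + 2*k = (m + k) + k := by ring
    rw [e]; exact fibZ_shift (m+k) k
  have h1 := fibZ_shift m k
  have h2 : (fib (m+k+1) : ℤ) = fib m * fib k + fib (m+1) * fib (k+1) := by
    exact_mod_cast Nat.fib_add m k
  have hC := cassini k
  have hL := lucasZ k
  rw [h3, h2, h1, hL]
  linear_combination (-(fib m : ℤ)) * hC

lemma base2 (j : ℕ) (hj : j % 2 = 1) :
    (fib (2*j+1) : ℤ) + 1 = (fib j : ℤ) * lucas (j+1) := by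
  have h1 : fib (2*j+1) = fib (j+1)^2 + fib j^2 := fib_two_mul_add_one j
  have hC := cassini j
  have hodd : Odd j := Nat.odd_iff.mpr hj
  rw [hodd.neg_one_pow] at hC
  have hL := lucasZ (j+1)
  have h2 : fib (j+2) = fib j + fib (j+1) := fib_add_two
  rw [h1, hL]
  push_cast [h2]
  linear_combination hC

lemma iter1 (k : ℕ) (hk : k % 2 = 0) :
    ∀ g, (lucas k : ℤ) ∣ (fib (2*k*g + 1) : ℤ) - (-1)^g := by
  intro g
  induction g with
  | zero => simp
  | succ g ih =>
    have step := step7 (2*k*g+1) k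
    rw [(Nat.even_iff.mpr hk).neg_one_pow] at step
    have e : 2*k*(g+1) + 1 = 2*k*g + 1 + 2*k := by ring
    rw [e]
    have : (fib (2*k*g+1+2*k) : ℤ) - (-1)^(g+1)
        = (fib (2*k*g+1+k) : ℤ) * lucas k - ((fib (2*k*g+1) : ℤ) - (-1)^g) := by
      linear_combination step
    rw [this]
    exact dvd_sub (Dvd.intro_left _ rfl) ih

lemma iter2 (j : ℕ) (hj : j % 2 = 1) :
    ∀ g, (lucas (j+1) : ℤ) ∣ (fib (2*(j+1)*g + (2*j+1)) : ℤ) + (-1)^g := by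
  intro g
  induction g with
  | zero =>
    simpa using (base2 j hj).symm ▸ (Dvd.intro_left _ rfl :
      (lucas (j+1) : ℤ) ∣ (fib j : ℤ) * lucas (j+1))
  | succ g ih =>
    have step := step7 (2*(j+1)*g + (2*j+1)) (j+1)
    rw [(Nat.even_iff.mpr (by omega) : Even (j+1)).neg_one_pow] at step
    have e : 2*(j+1)*(g+1) + (2*j+1) = 2*(j+1)*g + (2*j+1) + 2*(j+1) := by ring
    rw [e]
    have : (fib (2*(j+1)*g + (2*j+1) + 2*(j+1)) : ℤ) + (-1)^(g+1)
        = (fib (2*(j+1)*g + (2*j+1) + (j+1)) : ℤ) * lucas (j+1)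
          - ((fib (2*(j+1)*g + (2*j+1)) : ℤ) + (-1)^g) := by
      linear_combination step
    rw [this]
    exact dvd_sub (Dvd.intro_left _ rfl) ih

lemma fib_five_mul (t : ℕ) (ht : Odd t) :
    (fib (5*t) : ℤ) = 5 * (fib t : ℤ) * (5*(fib t : ℤ)^4 - 5*(fib t : ℤ)^2 + 1) := by
  have hC : (fib (t+1) : ℤ)^2 - fib (t+1) * fib t - (fib t : ℤ)^2 = -1 := by
    rw [cassini t, ht.neg_one_pow]
  have e1 : (fib (t+t) : ℤ) = ((fib (t+1) : ℤ) - fib t) * fib t + fib t * fib (t+1) :=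
    fibZ_shift t t
  have e1' : (fib (t+t+1) : ℤ) = (fib t : ℤ) * fib t + (fib (t+1) : ℤ) * fib (t+1) := by
    exact_mod_cast Nat.fib_add t t
  have e2 : (fib (t+t+t) : ℤ)
      = ((fib (t+1) : ℤ) - fib t) * fib (t+t) + fib t * fib (t+t+1) := fibZ_shift (t+t) t
  have e2' : (fib (t+t+t+1) : ℤ)
      = (fib (t+t) : ℤ) * fib t + (fib (t+t+1) : ℤ) * fib (t+1) := by
    exact_mod_cast Nat.fib_add (t+t) t
  have e3 : (fib (t+t+t+t) : ℤ)
      = ((fib (t+1) : ℤ) - fib t) * fib (t+t+t) + fib t * fib (t+t+t+1) :=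
    fibZ_shift (t+t+t) t
  have e3' : (fib (t+t+t+t+1) : ℤ)
      = (fib (t+t+t) : ℤ) * fib t + (fib (t+t+t+1) : ℤ) * fib (t+1) := by
    exact_mod_cast Nat.fib_add (t+t+t) t
  have e4 : (fib (t+t+t+t+t) : ℤ)
      = ((fib (t+1) : ℤ) - fib t) * fib (t+t+t+t) + fib t * fib (t+t+t+t+1) :=
    fibZ_shift (t+t+t+t) t
  have e5 : 5*t = t+t+t+t+t := by ring
  rw [e5, e4, e3, e3', e2, e2', e1, e1']
  linear_combination (5*(fib t : ℤ)*(fib (t+1) : ℤ)^2 - 5*(fib t : ℤ)^2*(fib (t+1) : ℤ)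
    + 20*(fib t : ℤ)^3 - 5*(fib t : ℤ)) * hC

lemma lucas_mod4_aux : ∀ m, lucas (m+6) % 4 = lucas m % 4 ∧ lucas (m+7) % 4 = lucas (m+1) % 4 := by
  intro m
  induction m with
  | zero => exact ⟨rfl, rfl⟩
  | succ m ih =>
    obtain ⟨ih1, ih2⟩ := ih
    refine ⟨ih2, ?_⟩
    have h1 : lucas (m+8) = lucas (m+7) + lucas (m+6) := lucas_add_two (m+6)
    have h2 : lucas (m+2) = lucas (m+1) + lucas m := lucas_add_two m
    show lucas (m+8) % 4 = lucas (m+2) % 4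
    omega

lemma lucas_mod4 (k : ℕ) (h2 : k % 2 = 0) (h3 : ¬ 3 ∣ k) : lucas k % 4 = 3 := by
  have hper : ∀ q r, lucas (6*q + r) % 4 = lucas r % 4 := by
    intro q
    induction q with
    | zero => intro r; norm_num
    | succ q ih =>
      intro r
      have e : 6*(q+1) + r = (6*q + r) + 6 := by ring
      rw [e, (lucas_mod4_aux (6*q+r)).1, ih r]
  have hk6 : k % 6 = 2 ∨ k % 6 = 4 := by omega
  have he : k = 6*(k/6) + k % 6 := by omega
  rcases hk6 with h | h
  · rw [he, h, hper]; rfl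
  · rw [he, h, hper]; rfl

lemma exists_prime_3mod4 : ∀ n, n % 4 = 3 → ∃ p, Nat.Prime p ∧ p ∣ n ∧ p % 4 = 3 := by
  intro n
  induction n using Nat.strong_induction_on with
  | _ n ih =>
    intro hn
    have hne1 : n ≠ 1 := by omega
    have hp := Nat.minFac_prime hne1
    have hpd : n.minFac ∣ n := Nat.minFac_dvd n
    by_cases hp4 : n.minFac % 4 = 3
    · exact ⟨n.minFac, hp, hpd, hp4⟩
    · obtain ⟨m, hm⟩ := hpd
      have hodd : ¬ 2 ∣ n := by omega
      have hp2 : n.minFac % 2 = 1 := by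
        have h2 : ¬ 2 ∣ n.minFac := fun h => hodd (h.trans (Nat.minFac_dvd n))
        omega
      have hple := hp.two_le
      have hp1 : n.minFac % 4 = 1 := by omega
      have hmod := Nat.mul_mod n.minFac m 4
      rw [← hm, hp1] at hmod
      have hm4 : m % 4 = 3 := by omega
      have hm0 : 0 < m := by
        rcases Nat.eq_zero_or_pos m with h | h
        · subst h; simp at hm; omega
        · exact h
      have hmlt : m < n := by
        rw [hm]
        calc m = 1 * m := (one_mul m).symm
        _ < n.minFac * m := by
            exact Nat.mul_lt_mul_of_lt_of_le (by omega) (le_refl m) hm0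
      obtain ⟨q, hq1, hq2, hq3⟩ := ih m hmlt hm4
      exact ⟨q, hq1, hq2.trans (Dvd.intro_left _ hm.symm), hq3⟩

lemma no_neg_one (p : ℕ) (hp : Nat.Prime p) (h4 : p % 4 = 3) (r : ℤ) :
    ¬ (p : ℤ) ∣ r^2 + 1 := by
  intro hd
  haveI := Fact.mk hp
  have h0 : ((r^2 + 1 : ℤ) : ZMod p) = 0 := by
    rw [ZMod.intCast_zmod_eq_zero_iff_dvd]
    exact hd
  push_cast at h0
  have hsq : IsSquare (-1 : ZMod p) := ⟨(r : ZMod p), by linear_combination -h0⟩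
  rw [ZMod.exists_sq_eq_neg_one_iff] at hsq
  exact hsq h4

lemma five_dvd_idx (m : ℕ) (h : 5 ∣ fib m) : 5 ∣ m := by
  have hg := Nat.fib_gcd 5 m
  have h5 : fib 5 = 5 := rfl
  rw [h5, Nat.gcd_eq_left h] at hg
  have hd : Nat.gcd 5 m ∣ 5 := Nat.gcd_dvd_left 5 m
  rcases (Nat.prime_five.eq_one_or_self_of_dvd _ hd) with h1 | h1
  · rw [h1] at hg; simp [fib_one] at hg
  · rw [← h1]; exact Nat.gcd_dvd_right 5 m

lemma split_u (u : ℕ) (hu0 : u ≠ 0) (hue : u % 2 = 0) :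
    ∃ g k, g * k = u ∧ ¬ 3 ∣ k ∧ Odd g ∧ k % 2 = 0 := by
  refine ⟨3^(u.factorization 3), u / 3^(u.factorization 3),
    Nat.ordProj_mul_ordCompl_eq_self u 3,
    Nat.not_dvd_ordCompl (by norm_num) hu0, Odd.pow (by decide), ?_⟩
  have h2u : 2 ∣ u := by omega
  have heq := Nat.ordProj_mul_ordCompl_eq_self u 3
  rcases (Nat.Prime.dvd_mul Nat.prime_two).mp (heq ▸ h2u) with h | h
  · have h23 := Nat.prime_two.dvd_of_dvd_pow h
    norm_num at h23
  · omega

lemma cohn_contra (k : ℕ) (hk2 : k % 2 = 0) (hk3 : ¬ 3 ∣ k) (t r : ℕ)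
    (hfib : fib t = r^2) (hdvd : (lucas k : ℤ) ∣ (fib t : ℤ) + 1) : False := by
  have hL4 := lucas_mod4 k hk2 hk3
  obtain ⟨p, hp, hpL, hp4⟩ := exists_prime_3mod4 (lucas k) hL4
  rw [hfib] at hdvd
  push_cast at hdvd
  have hpd : (p : ℤ) ∣ (r : ℤ)^2 + 1 :=
    dvd_trans (Int.natCast_dvd_natCast.mpr hpL) hdvd
  exact no_neg_one p hp hp4 r hpd

lemma cohn (t r : ℕ) (hodd : Odd t) (hfib : fib t = r^2) : t = 1 := by
  by_contra hne
  have ht2 := Nat.odd_iff.mp hodd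
  have ht3 : 3 ≤ t := by omega
  rcases (by omega : t % 4 = 1 ∨ t % 4 = 3) with h4 | h4
  · -- t ≥ 5, t = 2u+1, u even
    obtain ⟨g, k, hgk, h3k, hgodd, hk2⟩ :=
      split_u ((t-1)/2) (by omega) (by omega)
    have hu : t = 2 * ((t-1)/2) + 1 := by omega
    have hidx : 2*k*g + 1 = t := by
      have h1 : 2*k*g = 2*(g*k) := by ring
      rw [h1, hgk]; omega
    have hd := iter1 k hk2 g
    rw [hidx, hgodd.neg_one_pow] at hd
    have hd' : (lucas k : ℤ) ∣ (fib t : ℤ) + 1 := by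
      have e : (fib t : ℤ) - (-1) = (fib t : ℤ) + 1 := by ring
      rwa [e] at hd
    exact cohn_contra k hk2 h3k t r hfib hd'
  · obtain ⟨g, k, hgk, h3k, hgodd, hk2⟩ :=
      split_u ((t+1)/2) (by omega) (by omega)
    have hu : t + 1 = 2 * ((t+1)/2) := by omega
    have hk0 : k ≠ 0 := by
      rintro rfl
      rw [Nat.mul_zero] at hgk
      omega
    have hg0 : g ≠ 0 := by
      rintro rfl
      rw [Nat.zero_mul] at hgk
      omega
    obtain ⟨j, rfl⟩ : ∃ j, k = j + 1 := ⟨k - 1, by omega⟩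
    obtain ⟨g', rfl⟩ : ∃ g', g = g' + 1 := ⟨g - 1, by omega⟩
    have hjodd : j % 2 = 1 := by omega
    have hg'e : g' % 2 = 0 := by
      have := Nat.odd_iff.mp hgodd
      omega
    have hx : 2*((g'+1)*(j+1)) = 2*(j+1)*g' + (2*j+1) + 1 := by ring
    have h2 : t + 1 = 2*(j+1)*g' + (2*j+1) + 1 := by
      rw [← hx, hgk]; exact hu
    have hidx : 2*(j+1)*g' + (2*j+1) = t := by
      exact (Nat.succ_injective h2).symm
    have hd := iter2 j hjodd g'
    rw [hidx, (Nat.even_iff.mpr hg'e).neg_one_pow] at hd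
    exact cohn_contra (j+1) hk2 h3k t r hfib hd

theorem stmt13 (n x : ℕ) (hn : 1 ≤ n) (hx : 1 ≤ x)
    (h : lucas n ^ 2 + lucas (n + 1) ^ 2 = x ^ 2) : n = 2 ∧ x = 5 := by
  have hkey := key_identity n
  rw [h] at hkey
  have h5x : 5 ∣ x := by
    refine (Nat.prime_five).dvd_of_dvd_pow (n := 2) ?_
    exact ⟨fib (2*n+1), hkey⟩
  obtain ⟨y, hy⟩ := h5x
  have hy1 : 1 ≤ y := by omega
  have h25 : 25 * y^2 = 5 * fib (2*n+1) := by rw [← hkey, hy]; ring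
  have hF : fib (2*n+1) = 5 * y^2 := by
    set Y := y^2 with hY
    set F := fib (2*n+1) with hFd
    omega
  have h5d : 5 ∣ 2*n+1 := five_dvd_idx _ ⟨y^2, hF⟩
  obtain ⟨t, ht⟩ := h5d
  have htodd : Odd t := Nat.odd_iff.mpr (by omega)
  have hfz := fib_five_mul t htodd
  rw [← ht, hF] at hfz
  have hyQ : (fib t : ℤ) * (5*(fib t:ℤ)^4 - 5*(fib t:ℤ)^2 + 1) = ((y:ℤ))^2 := by
    have h5 : (5:ℤ) ≠ 0 := by norm_num
    apply mul_left_cancel₀ h5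
    push_cast at hfz
    linear_combination -hfz
  have hcop : IsCoprime (fib t : ℤ) (5*(fib t:ℤ)^4 - 5*(fib t:ℤ)^2 + 1) :=
    ⟨-(5*(fib t:ℤ)^3 - 5*(fib t:ℤ)), 1, by ring⟩
  obtain ⟨r, hr⟩ := Int.sq_of_isCoprime hcop hyQ
  have hfib : fib t = r.natAbs ^ 2 := by
    have habs : ((r.natAbs : ℤ))^2 = r^2 := by
      rw [← Int.abs_eq_natAbs, sq_abs]
    rcases hr with hr | hr
    · exact_mod_cast hr.trans habs.symm
    · exfalso
      have h1 : 0 < fib t := fib_pos.mpr (by omega)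
      have h1' : (0:ℤ) < (fib t : ℤ) := by exact_mod_cast h1
      nlinarith [sq_nonneg r]
  have ht1 : t = 1 := cohn t r.natAbs htodd hfib
  subst ht1
  have hn2 : n = 2 := by omega
  subst hn2
  have hx25 : x^2 = 25 := by
    rw [hkey]
    rfl
  have hx5 : x = 5 := by nlinarith [hx25]
  exact ⟨rfl, hx5⟩
end
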